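/- arXiv:2002.06920 — 10 statements merged into one kernel-verified Lean document; each statement's English description precedes it below -/
import Mathlib

section
/- Under the total non-inclusion relation, for every negative sequential pattern p and sequence s, a tuple e is a soft embedding of p in s if and only if e is a strict embedding of p in s. -/
namespace NSPpaper

/-- A sequence is a finite list of itemsets (finite sets of items). -/
abbrev Seq (ι : Type*) := List (Finset ι)

/-- `P` is partially non-included in `I`: `P` is empty or some element of `P` is not in `I`. -/
def PartialNonIncl {ι : Type*} (P I : Finset ι) : Prop := P = ∅ ∨ ∃ e ∈ P, e ∉ I

/-- `P` is totally non-included in `I`: no element of `P` is in `I`. -/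
def TotalNonIncl {ι : Type*} (P I : Finset ι) : Prop := ∀ e ∈ P, e ∉ I

/-- A negative sequential pattern `⟨p₁ ¬q₁ p₂ ¬q₂ … ¬q_{m-1} p_m⟩`:
nonempty positive itemsets `pos = [p₁, …, p_m]` and negative itemsets
`neg = [q₁, …, q_{m-1}]` (possibly empty itemsets). -/
structure NSP (ι : Type*) where
  pos : List (Finset ι)
  neg : List (Finset ι)
  pos_ne : pos ≠ []
  pos_nonempty : ∀ P ∈ pos, P.Nonempty
  len : neg.length + 1 = pos.length

variable {ι : Type*}

/-- `e` is an embedding of the positive part `p⁺` of `p` in `s`: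
strictly increasing positions with `p_i ⊆ s_{e_i}`. -/
def IsPosEmbedding (p : NSP ι) (s : Seq ι) (e : Fin p.pos.length → Fin s.length) : Prop :=
  StrictMono e ∧ ∀ i, p.pos.get i ⊆ s.get (e i)

/-- Soft embedding w.r.t. the non-inclusion relation `ni`:
an embedding of `p⁺` such that `q_i ⋫ s_j` for every `j` with `e_i < j < e_{i+1}`. -/
def IsSoftEmbedding (ni : Finset ι → Finset ι → Prop) (p : NSP ι) (s : Seq ι)
    (e : Fin p.pos.length → Fin s.length) : Prop :=
  IsPosEmbedding p s e ∧
  ∀ i : Fin p.neg.length, ∀ j : Fin s.length,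
    (e ⟨i.1, by have h1 := p.len; have h2 := i.2; omega⟩).1 < j.1 →
    j.1 < (e ⟨i.1 + 1, by have h1 := p.len; have h2 := i.2; omega⟩).1 →
    ni (p.neg.get i) (s.get j)

/-- Union `⋃_{a < j < b} s_j` of the itemsets of `s` strictly between positions `a` and `b`. -/
def segUnion [DecidableEq ι] (s : Seq ι) (a b : ℕ) : Finset ι :=
  (Finset.Ioo a b).biUnion (fun j => s.getD j ∅)

/-- Strict embedding w.r.t. the non-inclusion relation `ni`:
an embedding of `p⁺` such that `q_i ⋫ ⋃_{e_i < j < e_{i+1}} s_j`. -/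
def IsStrictEmbedding [DecidableEq ι] (ni : Finset ι → Finset ι → Prop) (p : NSP ι) (s : Seq ι)
    (e : Fin p.pos.length → Fin s.length) : Prop :=
  IsPosEmbedding p s e ∧
  ∀ i : Fin p.neg.length,
    ni (p.neg.get i)
      (segUnion s (e ⟨i.1, by have h1 := p.len; have h2 := i.2; omega⟩).1
                  (e ⟨i.1 + 1, by have h1 := p.len; have h2 := i.2; omega⟩).1)

/-- Embedding type: soft or strict. -/
inductive EmbT | soft | strict

/-- `τ`-embedding (soft or strict) w.r.t. non-inclusion `ni`. -/
def IsEmb [DecidableEq ι] (τ : EmbT) (ni : Finset ι → Finset ι → Prop) (p : NSP ι) (s : Seq ι)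
    (e : Fin p.pos.length → Fin s.length) : Prop :=
  match τ with
  | .soft => IsSoftEmbedding ni p s e
  | .strict => IsStrictEmbedding ni p s e

/-- `p` weakly occurs in `s` under `(τ, ni)`: some `τ`-embedding of `p` in `s` exists. -/
def WeakOcc [DecidableEq ι] (τ : EmbT) (ni : Finset ι → Finset ι → Prop)
    (p : NSP ι) (s : Seq ι) : Prop :=
  ∃ e, IsEmb τ ni p s e

/-- `p` strongly occurs in `s` under `(τ, ni)`: some embedding of `p⁺` in `s` exists and
every embedding of `p⁺` in `s` is a `τ`-embedding of `p`. -/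
def StrongOcc [DecidableEq ι] (τ : EmbT) (ni : Finset ι → Finset ι → Prop)
    (p : NSP ι) (s : Seq ι) : Prop :=
  (∃ e, IsPosEmbedding p s e) ∧ ∀ e, IsPosEmbedding p s e → IsEmb τ ni p s e

/-- Occurrence mode: weak or strong. -/
inductive OccMode | weak | strong

/-- `p` occurs in `s` under mode `μ`, embedding type `τ` and non-inclusion `ni`. -/
def Occurs [DecidableEq ι] (μ : OccMode) (τ : EmbT) (ni : Finset ι → Finset ι → Prop)
    (p : NSP ι) (s : Seq ι) : Prop :=
  match μ with
  | .weak => WeakOcc τ ni p s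
  | .strong => StrongOcc τ ni p s

/-- Dominance: `θ ⩾ θ'` iff `p θ s` implies `p θ' s` for every NSP `p` and sequence `s`. -/
def Dominates (θ θ' : NSP ι → Seq ι → Prop) : Prop :=
  ∀ (p : NSP ι) (s : Seq ι), θ p s → θ' p s

/-- The set Θ of the eight containment relations. -/
def Theta (ι : Type*) [DecidableEq ι] : Set (NSP ι → Seq ι → Prop) :=
  { θ | ∃ (μ : OccMode) (τ : EmbT) (ni : Finset ι → Finset ι → Prop),
      (ni = PartialNonIncl ∨ ni = TotalNonIncl) ∧ θ = Occurs μ τ ni }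

/-- `p ⊑ p'`. -/
def NspIncl [DecidableEq ι] (p p' : NSP ι) : Prop :=
  p.pos.length ≤ p'.pos.length ∧
  ∃ u : Fin p.pos.length → Fin p'.pos.length, StrictMono u ∧
    (∀ i, p.pos.get i ⊆ p'.pos.get (u i)) ∧
    (∀ i : Fin p.neg.length,
      p.neg.get i ⊆
        (Finset.Ico (u ⟨i.1, by have h1 := p.len; have h2 := i.2; omega⟩).1
                    (u ⟨i.1 + 1, by have h1 := p.len; have h2 := i.2; omega⟩).1).biUnion
          (fun j => p'.neg.getD j ∅)) ∧
    (p.pos.length = p'.pos.length →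
      (∃ j : Fin p.pos.length, p.pos.get j ≠ p'.pos.getD j.1 ∅) ∨
      (∃ j : Fin p.neg.length, p.neg.get j ≠ p'.neg.getD j.1 ∅))

/-- `p ◁ p'`. -/
def Lhd (p p' : NSP ι) : Prop :=
  p.pos.length ≤ p'.pos.length ∧
  (∀ i : Fin p.pos.length, p.pos.get i ⊆ p'.pos.getD i.1 ∅) ∧
  (∀ i : Fin p.neg.length, p.neg.get i ⊆ p'.neg.getD i.1 ∅) ∧
  (p.pos.length = p'.pos.length →
    p.pos.getD (p.pos.length - 1) ∅ ≠ p'.pos.getD (p.pos.length - 1) ∅ ∨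
    ∃ j : Fin p.neg.length, p.neg.get j ≠ p'.neg.getD j.1 ∅)

/-- `p ⊑⁺ p'`. -/
def NspInclPlus (p p' : NSP ι) : Prop :=
  p.pos.length = p'.pos.length ∧
  (∀ i : Fin p.pos.length, p.pos.get i = p'.pos.getD i.1 ∅) ∧
  (∀ i : Fin p.neg.length, p.neg.get i ⊆ p'.neg.getD i.1 ∅) ∧
  (∃ j : Fin p.neg.length, p.neg.get j ≠ p'.neg.getD j.1 ∅)

/-- Support of `p` in the dataset `D` w.r.t. the containment relation `θ`:
the number of sequences of `D` in which `p` occurs according to `θ`. -/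
noncomputable def supp (θ : NSP ι → Seq ι → Prop) (D : Finset (Seq ι)) (p : NSP ι) : ℕ :=
  letI := Classical.decPred (fun s : Seq ι => θ p s)
  (D.filter fun s => θ p s).card

/-- under total non-inclusion, soft and strict embeddings coincide. -/
theorem soft_iff_strict_total {ι : Type*} [DecidableEq ι]
    (p : NSP ι) (s : Seq ι) (e : Fin p.pos.length → Fin s.length) :
    IsSoftEmbedding TotalNonIncl p s e ↔ IsStrictEmbedding TotalNonIncl p s e := by
  constructor
  · rintro ⟨hpos, h⟩
    refine ⟨hpos, fun i => ?_⟩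
    intro x hx hxU
    simp only [segUnion, Finset.mem_biUnion, Finset.mem_Ioo] at hxU
    obtain ⟨j, ⟨hj1, hj2⟩, hxj⟩ := hxU
    have hjlt : j < s.length := lt_trans hj2 (Fin.is_lt _)
    have := h i ⟨j, hjlt⟩ hj1 hj2 x hx
    apply this
    simpa [List.getD_eq_getElem?_getD, List.getElem?_eq_getElem hjlt] using hxj
  · rintro ⟨hpos, h⟩
    refine ⟨hpos, fun i j h1 h2 x hx hxj => ?_⟩
    apply h i x hx
    simp only [segUnion, Finset.mem_biUnion, Finset.mem_Ioo]
    exact ⟨j.1, ⟨h1, h2⟩, by simpa [List.getD_eq_getElem?_getD, List.getElem?_eq_getElem j.2] using hxj⟩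


end NSPpaper
end

section
/- Let p = ⟨p₁ ¬q₁ … ¬q_{m-1} p_m⟩ be a negative sequential pattern all of whose negative itemsets q_i have at most one element. Then, for either non-inclusion relation (partial or total), a tuple e is a soft embedding of p in a sequence s if and only if e is a strict embedding of p in s. -/
/-!
A strict embedding asks `q_i ⋫ ⋃_{e_i < j < e_{i+1}} s_j`, a soft one asks `q_i ⋫ s_j` for each
such `j`; the two agree as soon as `q_i ⋫ ·` turns unions into conjunctions. Total
non-inclusion is disjointness, which always does. Partial non-inclusion does not in general, but
for an itemset with at most one element it coincides with total non-inclusion.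
-/

namespace NSPpaper

variable {ι : Type*}

theorem partialNonIncl_iff_totalNonIncl_of_card_le_one {P I : Finset ι} (hP : P.card ≤ 1) :
    PartialNonIncl P I ↔ TotalNonIncl P I := by
  refine ⟨?_, fun h => P.eq_empty_or_nonempty.imp id fun ⟨x, hx⟩ => ⟨x, hx, h x hx⟩⟩
  rintro (rfl | ⟨x, hx, hxI⟩) y hy
  · simp at hy
  · rwa [Finset.card_le_one.mp hP y hy x hx]

theorem totalNonIncl_biUnion_iff [DecidableEq ι] {κ : Type*} {P : Finset ι} {t : Finset κ}
    {f : κ → Finset ι} : TotalNonIncl P (t.biUnion f) ↔ ∀ j ∈ t, TotalNonIncl P (f j) := by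
  simp only [TotalNonIncl, ← Finset.disjoint_left, Finset.disjoint_biUnion_right]

theorem forall_get_iff_forall_Ioo_getD {s : Seq ι} {a b : ℕ} (hb : b ≤ s.length)
    (P : Finset ι → Prop) :
    (∀ j : Fin s.length, a < j.1 → j.1 < b → P (s.get j)) ↔
      ∀ j ∈ Finset.Ioo a b, P (s.getD j ∅) := by
  constructor
  · intro h j hj
    obtain ⟨hja, hjb⟩ := Finset.mem_Ioo.mp hj
    rw [List.getD_eq_get _ _ ⟨j, by omega⟩]
    exact h ⟨j, by omega⟩ hja hjb
  · intro h j hja hjb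
    simpa [List.getD_eq_get _ _ j] using h j (Finset.mem_Ioo.mpr ⟨hja, hjb⟩)

theorem isSoftEmbedding_iff_isStrictEmbedding [DecidableEq ι] {ni : Finset ι → Finset ι → Prop}
    {p : NSP ι}
    (hni : ∀ q ∈ p.neg, ∀ (t : Finset ℕ) (f : ℕ → Finset ι),
      ni q (t.biUnion f) ↔ ∀ j ∈ t, ni q (f j))
    (s : Seq ι) (e : Fin p.pos.length → Fin s.length) :
    IsSoftEmbedding ni p s e ↔ IsStrictEmbedding ni p s e := by
  refine and_congr_right fun _ => forall_congr' fun i => ?_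
  rw [segUnion, hni _ (List.get_mem _ _)]
  exact forall_get_iff_forall_Ioo_getD (e _).is_lt.le _

/-- if all negative itemsets of `p` have at most one element, then
soft and strict embeddings coincide, for either non-inclusion relation. -/
theorem soft_iff_strict_of_singleton_negatives {ι : Type*} [DecidableEq ι]
    (p : NSP ι) (hq : ∀ q ∈ p.neg, q.card ≤ 1)
    (ni : Finset ι → Finset ι → Prop)
    (hni : ni = PartialNonIncl ∨ ni = TotalNonIncl)
    (s : Seq ι) (e : Fin p.pos.length → Fin s.length) :
    IsSoftEmbedding ni p s e ↔ IsStrictEmbedding ni p s e := by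
  refine isSoftEmbedding_iff_isStrictEmbedding (fun q hqp t f => ?_) s e
  rcases hni with rfl | rfl
  · simp only [partialNonIncl_iff_totalNonIncl_of_card_le_one (hq q hqp),
      totalNonIncl_biUnion_iff]
  · exact totalNonIncl_biUnion_iff

end NSPpaper
end

section
/- Let D be a finite dataset of sequences, let τ ∈ {soft, strict}, and use total non-inclusion. (i) If p ◁ p' then supp_{weak,τ,total}^D(p') ≤ supp_{weak,τ,total}^D(p). (ii) If p ⊑⁺ p' then supp_{strong,τ,total}^D(p') ≤ supp_{strong,τ,total}^D(p) and supp_{weak,τ,total}^D(p') ≤ supp_{weak,τ,total}^D(p). -/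
namespace NSPpaper

variable {ι : Type*}

private lemma getD_get' {α : Type*} (l : List α) (d : α) (n : ℕ) (h : n < l.length) :
    l.getD n d = l.get ⟨n, h⟩ := by
  simp [List.getD_eq_getElem?_getD, List.getElem?_eq_getElem h]

private lemma total_anti {ι : Type*} {P P' I : Finset ι} (h : P ⊆ P')
    (hT : TotalNonIncl P' I) : TotalNonIncl P I := fun e he => hT e (h he)

/-- Weak occurrence is antitone along `Lhd`. -/
private lemma weak_occ_mono {ι : Type*} [DecidableEq ι] (τ : EmbT) {p p' : NSP ι}
    (h : Lhd p p') (s : Seq ι) (ho : WeakOcc τ TotalNonIncl p' s) :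
    WeakOcc τ TotalNonIncl p s := by
  obtain ⟨hle, hpos, hneg, -⟩ := h
  obtain ⟨e, he⟩ := ho
  have hnle : p.neg.length ≤ p'.neg.length := by
    have := p.len; have := p'.len; omega
  set u : Fin p.pos.length → Fin p'.pos.length :=
    fun i => ⟨i.1, lt_of_lt_of_le i.2 hle⟩ with hu
  have hposemb : ∀ (hpe : IsPosEmbedding p' s e), IsPosEmbedding p s (e ∘ u) := by
    intro hpe
    refine ⟨fun i j hij => hpe.1 (by exact hij), fun i => ?_⟩
    refine subset_trans ?_ (hpe.2 (u i))
    have := hpos i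
    rwa [getD_get' _ _ _ (lt_of_lt_of_le i.2 hle)] at this
  have hnsub : ∀ i : Fin p.neg.length,
      p.neg.get i ⊆ p'.neg.get ⟨i.1, lt_of_lt_of_le i.2 hnle⟩ := by
    intro i
    have := hneg i
    rwa [getD_get' _ _ _ (lt_of_lt_of_le i.2 hnle)] at this
  cases τ with
  | soft =>
    obtain ⟨hpe, hsoft⟩ := he
    refine ⟨e ∘ u, hposemb hpe, ?_⟩
    intro i j h1 h2
    refine total_anti (hnsub i) (hsoft ⟨i.1, lt_of_lt_of_le i.2 hnle⟩ j ?_ ?_)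
    · exact h1
    · exact h2
  | strict =>
    obtain ⟨hpe, hstr⟩ := he
    refine ⟨e ∘ u, hposemb hpe, ?_⟩
    intro i
    exact total_anti (hnsub i) (hstr ⟨i.1, lt_of_lt_of_le i.2 hnle⟩)

/-- `NspInclPlus` implies `Lhd`. -/
private lemma inclPlus_lhd {ι : Type*} {p p' : NSP ι} (h : NspInclPlus p p') : Lhd p p' := by
  obtain ⟨hlen, hpos, hneg, hj⟩ := h
  exact ⟨hlen.le, fun i => (hpos i).le, hneg, fun _ => Or.inr hj⟩

/-- Strong occurrence is antitone along `NspInclPlus`. -/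
private lemma strong_occ_mono {ι : Type*} [DecidableEq ι] (τ : EmbT) {p p' : NSP ι}
    (h : NspInclPlus p p') (s : Seq ι) (ho : StrongOcc τ TotalNonIncl p' s) :
    StrongOcc τ TotalNonIncl p s := by
  obtain ⟨hlen, hpos, hneg, -⟩ := h
  have hnlen : p.neg.length = p'.neg.length := by
    have := p.len; have := p'.len; omega
  have hposget : ∀ i : Fin p.pos.length,
      p.pos.get i = p'.pos.get (Fin.cast hlen i) := by
    intro i
    have := hpos i
    rwa [getD_get' _ _ _ (hlen ▸ i.2)] at this
  have hnegget : ∀ i : Fin p.neg.length,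
      p.neg.get i ⊆ p'.neg.get (Fin.cast hnlen i) := by
    intro i
    have := hneg i
    rwa [getD_get' _ _ _ (hnlen ▸ i.2)] at this
  have key : ∀ e : Fin p.pos.length → Fin s.length, IsPosEmbedding p s e →
      IsPosEmbedding p' s (e ∘ Fin.cast hlen.symm) := by
    intro e ⟨hm, hsub⟩
    refine ⟨fun i j hij => hm (by exact hij), fun i => ?_⟩
    have := hsub (Fin.cast hlen.symm i)
    rwa [hposget, show Fin.cast hlen (Fin.cast hlen.symm i) = i from rfl] at this
  have key' : ∀ e : Fin p'.pos.length → Fin s.length, IsPosEmbedding p' s e →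
      IsPosEmbedding p s (e ∘ Fin.cast hlen) := by
    intro e ⟨hm, hsub⟩
    refine ⟨fun i j hij => hm (by exact hij), fun i => ?_⟩
    rw [hposget]; exact hsub (Fin.cast hlen i)
  obtain ⟨⟨e0, he0⟩, hall⟩ := ho
  refine ⟨⟨e0 ∘ Fin.cast hlen, key' e0 he0⟩, ?_⟩
  intro e hpe
  have hpe' := key e hpe
  have hemb := hall _ hpe'
  cases τ with
  | soft =>
    obtain ⟨-, hsoft⟩ := hemb
    refine ⟨hpe, ?_⟩
    intro i j h1 h2
    refine total_anti (hnegget i)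
      (hsoft (Fin.cast hnlen i) j ?_ ?_)
    · exact h1
    · exact h2
  | strict =>
    obtain ⟨-, hstr⟩ := hemb
    refine ⟨hpe, ?_⟩
    intro i
    exact total_anti (hnegget i) (hstr (Fin.cast hnlen i))

private lemma supp_mono {ι : Type*} (θ : NSP ι → Seq ι → Prop) (D : Finset (Seq ι))
    {p p' : NSP ι} (h : ∀ s, θ p' s → θ p s) : supp θ D p' ≤ supp θ D p := by
  classical
  unfold supp
  exact Finset.card_le_card (fun s hs => by
    simp only [Finset.mem_filter] at *
    exact ⟨hs.1, h s hs.2⟩)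

/-- anti-monotonicity of support under total non-inclusion:
(i) if `p ◁ p'` then the weak support of `p'` is at most that of `p`;
(ii) if `p ⊑⁺ p'` then both the strong and the weak support of `p'` are at most
those of `p`. -/
theorem supp_antimonotone {ι : Type*} [DecidableEq ι]
    (D : Finset (Seq ι)) (τ : EmbT) (p p' : NSP ι) :
    (Lhd p p' →
      supp (WeakOcc τ TotalNonIncl) D p' ≤ supp (WeakOcc τ TotalNonIncl) D p) ∧
    (NspInclPlus p p' →
      supp (StrongOcc τ TotalNonIncl) D p' ≤ supp (StrongOcc τ TotalNonIncl) D p ∧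
      supp (WeakOcc τ TotalNonIncl) D p' ≤ supp (WeakOcc τ TotalNonIncl) D p) := by
  refine ⟨fun h => supp_mono _ D (weak_occ_mono τ h), fun h =>
    ⟨supp_mono _ D (strong_occ_mono τ h),
     supp_mono _ D (weak_occ_mono τ (inclPlus_lhd h))⟩⟩

end NSPpaper
end

section
/- For every non-inclusion relation ⋫ ∈ {partial, total}: the weak strict-embedding containment relation dominates the weak soft-embedding containment relation, and the strong strict-embedding containment relation dominates the strong soft-embedding containment relation; that is, for every NSP p and sequence s, if p occurs in s with a strict embedding (weakly, resp. strongly) then p occurs in s with a soft embedding (weakly, resp. strongly). -/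
namespace NSPpaper

variable {ι : Type*}

lemma subset_segUnion [DecidableEq ι] (s : Seq ι) {a b : ℕ} (j : Fin s.length)
    (h1 : a < j.1) (h2 : j.1 < b) : s.get j ⊆ segUnion s a b := by
  intro x hx
  apply Finset.mem_biUnion.2
  exact ⟨j.1, Finset.mem_Ioo.2 ⟨h1, h2⟩, by rwa [List.getD_eq_getElem?_getD, List.getElem?_eq_getElem j.2, Option.getD_some, ← List.get_eq_getElem]⟩

lemma strict_to_soft [DecidableEq ι] (ni : Finset ι → Finset ι → Prop)
    (hni : ni = PartialNonIncl ∨ ni = TotalNonIncl) (p : NSP ι) (s : Seq ι)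
    (e : Fin p.pos.length → Fin s.length) (h : IsStrictEmbedding ni p s e) :
    IsSoftEmbedding ni p s e := by
  refine ⟨h.1, fun i j hj1 hj2 => ?_⟩
  have hsub := subset_segUnion s j hj1 hj2
  have := h.2 i
  rcases hni with rfl | rfl
  · rcases this with h0 | ⟨x, hx, hxn⟩
    · exact Or.inl h0
    · exact Or.inr ⟨x, hx, fun hxj => hxn (hsub hxj)⟩
  · exact fun x hx hxj => this x hx (hsub hxj)

/-- for either non-inclusion relation, strict-embedding containment
dominates soft-embedding containment, in both the weak and the strong modes. -/
theorem strict_dominates_soft {ι : Type*} [DecidableEq ι]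
    (ni : Finset ι → Finset ι → Prop)
    (hni : ni = PartialNonIncl ∨ ni = TotalNonIncl) :
    Dominates (WeakOcc (ι := ι) .strict ni) (WeakOcc .soft ni) ∧
    Dominates (StrongOcc (ι := ι) .strict ni) (StrongOcc .soft ni) := by
  constructor
  · rintro p s ⟨e, he⟩
    exact ⟨e, strict_to_soft ni hni p s e he⟩
  · rintro p s ⟨hex, hall⟩
    exact ⟨hex, fun e hpe => strict_to_soft ni hni p s e (hall e hpe)⟩

end NSPpaper
end

section
/- Under total non-inclusion: the weak soft-embedding containment relation dominates the weak strict-embedding containment relation, and the strong soft-embedding containment relation dominates the strong strict-embedding containment relation; that is, for every NSP p and sequence s, if p occurs in s with a soft embedding under total non-inclusion (weakly, resp. strongly) then p occurs in s with a strict embedding under total non-inclusion (weakly, resp. strongly). -/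
namespace NSPpaper

variable {ι : Type*}

lemma soft_to_strict {ι : Type*} [DecidableEq ι] (p : NSP ι) (s : Seq ι)
    (e : Fin p.pos.length → Fin s.length) (h : IsSoftEmbedding TotalNonIncl p s e) :
    IsStrictEmbedding TotalNonIncl p s e := by
  refine ⟨h.1, fun i x hx hxU => ?_⟩
  simp only [segUnion, Finset.mem_biUnion, Finset.mem_Ioo] at hxU
  obtain ⟨j, ⟨hj1, hj2⟩, hxj⟩ := hxU
  have hjlt : j < s.length := lt_trans hj2 (e _).2
  have := h.2 i ⟨j, hjlt⟩ hj1 hj2 x hx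
  rw [List.getD_eq_getElem?_getD, List.getElem?_eq_getElem hjlt] at hxj
  exact this hxj

/-- under total non-inclusion, soft-embedding containment dominates
strict-embedding containment, in both the weak and the strong modes. -/
theorem soft_dominates_strict_total {ι : Type*} [DecidableEq ι] :
    Dominates (WeakOcc (ι := ι) .soft TotalNonIncl) (WeakOcc .strict TotalNonIncl) ∧
    Dominates (StrongOcc (ι := ι) .soft TotalNonIncl) (StrongOcc .strict TotalNonIncl) := by
  constructor
  · rintro p s ⟨e, he⟩
    exact ⟨e, soft_to_strict p s e he⟩
  · rintro p s ⟨hex, hall⟩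
    exact ⟨hex, fun e hpe => soft_to_strict p s e (hall e hpe)⟩

end NSPpaper
end

section
/- Over an item alphabet with at least four distinct items a, b, c, d, for every embedding type τ ∈ {soft, strict} and both the weak and the strong occurrence modes, the containment relation with partial non-inclusion does not dominate the containment relation with total non-inclusion: there exist an NSP p and a sequence s (namely p = ⟨a ¬(bc) d⟩ and s = ⟨a b d⟩, with singleton positive itemsets {a}, {d}, negative itemset {b,c}, and s the list of singleton itemsets {a}, {b}, {d}) such that p occurs in s under (τ, partial) but p does not occur in s under (τ, total), in both the weak and strong modes. -/
namespace NSPpaper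

variable {ι : Type*}

/-- partial non-inclusion does not dominate total non-inclusion:
with `p = ⟨a ¬(bc) d⟩` and `s = ⟨a b d⟩`, for every embedding type `τ`, `p` occurs
in `s` under `(τ, partial)` (weakly and strongly) but not under `(τ, total)`. -/
theorem partial_not_dominates_total {ι : Type*} [DecidableEq ι]
    (a b c d : ι) (hab : a ≠ b) (hac : a ≠ c) (had : a ≠ d)
    (hbc : b ≠ c) (hbd : b ≠ d) (hcd : c ≠ d) :
    ∃ (p : NSP ι) (s : Seq ι),
      p.pos = [{a}, {d}] ∧ p.neg = [{b, c}] ∧ s = [{a}, {b}, {d}] ∧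
      ∀ τ : EmbT,
        WeakOcc τ PartialNonIncl p s ∧ StrongOcc τ PartialNonIncl p s ∧
        ¬ WeakOcc τ TotalNonIncl p s ∧ ¬ StrongOcc τ TotalNonIncl p s := by
  classical
  set p : NSP ι := ⟨[{a}, {d}], [{b, c}], by simp, fun P hP => by
      rcases List.mem_cons.mp hP with rfl | hP'
      · exact ⟨a, Finset.mem_singleton_self a⟩
      · rcases List.mem_singleton.mp hP' with rfl
        exact ⟨d, Finset.mem_singleton_self d⟩, rfl⟩
  set s : Seq ι := [{a}, {b}, {d}]
  have hlen2 : p.pos.length = 2 := rfl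
  have hlen1 : p.neg.length = 1 := rfl
  have hlen3 : s.length = 3 := rfl
  have h02 : (0 : ℕ) < p.pos.length := by omega
  have h12 : (1 : ℕ) < p.pos.length := by omega
  have h01n : (0 : ℕ) < p.neg.length := by omega
  -- the canonical embedding: position 2 * i
  let e0 : Fin p.pos.length → Fin s.length :=
    fun i => ⟨2 * i.1, by have h := i.2; omega⟩
  have he0pos : IsPosEmbedding p s e0 := by
    constructor
    · intro i j hij
      have h := Fin.lt_def.mp hij
      exact Fin.lt_def.mpr (by show 2 * i.1 < 2 * j.1; omega)
    · rintro ⟨iv, hiv⟩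
      have hiv2 : iv < 2 := hiv
      rcases (show iv = 0 ∨ iv = 1 by omega) with rfl | rfl
      · exact Finset.Subset.refl _
      · exact Finset.Subset.refl _
  -- every positive embedding takes values 0 and 2
  have hmem_pos : ∀ e, IsPosEmbedding p s e →
      (e ⟨0, h02⟩).1 = 0 ∧ (e ⟨1, h12⟩).1 = 2 := by
    rintro e ⟨hmono, hsub⟩
    have h0 : a ∈ s.get (e ⟨0, h02⟩) :=
      hsub ⟨0, h02⟩ (by exact Finset.mem_singleton_self a)
    have h1 : d ∈ s.get (e ⟨1, h12⟩) :=
      hsub ⟨1, h12⟩ (by exact Finset.mem_singleton_self d)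
    have hx3 : (e ⟨0, h02⟩).1 < 3 := (e ⟨0, h02⟩).2
    have hy3 : (e ⟨1, h12⟩).1 < 3 := (e ⟨1, h12⟩).2
    have hx0 : (e ⟨0, h02⟩).1 = 0 := by
      rcases (show (e ⟨0, h02⟩).1 = 0 ∨ (e ⟨0, h02⟩).1 = 1 ∨ (e ⟨0, h02⟩).1 = 2
          by omega) with h | h | h
      · exact h
      · exfalso
        have he : e ⟨0, h02⟩ = (⟨1, by omega⟩ : Fin s.length) := Fin.ext h
        rw [he] at h0
        have h0' : a ∈ ({b} : Finset ι) := h0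
        exact hab (Finset.mem_singleton.mp h0')
      · exfalso
        have he : e ⟨0, h02⟩ = (⟨2, by omega⟩ : Fin s.length) := Fin.ext h
        rw [he] at h0
        have h0' : a ∈ ({d} : Finset ι) := h0
        exact had (Finset.mem_singleton.mp h0')
    refine ⟨hx0, ?_⟩
    rcases (show (e ⟨1, h12⟩).1 = 0 ∨ (e ⟨1, h12⟩).1 = 1 ∨ (e ⟨1, h12⟩).1 = 2
        by omega) with h | h | h
    · exfalso
      have he : e ⟨1, h12⟩ = (⟨0, by omega⟩ : Fin s.length) := Fin.ext h
      rw [he] at h1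
      have h1' : d ∈ ({a} : Finset ι) := h1
      exact had (Finset.mem_singleton.mp h1').symm
    · exfalso
      have he : e ⟨1, h12⟩ = (⟨1, by omega⟩ : Fin s.length) := Fin.ext h
      rw [he] at h1
      have h1' : d ∈ ({b} : Finset ι) := h1
      exact hbd (Finset.mem_singleton.mp h1').symm
    · exact h
  -- every positive embedding equals e0
  have hforced : ∀ e, IsPosEmbedding p s e → e = e0 := by
    intro e he
    obtain ⟨hx0, hy2⟩ := hmem_pos e he
    funext i
    obtain ⟨iv, hiv⟩ := i
    have hiv2 : iv < 2 := hiv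
    apply Fin.ext
    rcases (show iv = 0 ∨ iv = 1 by omega) with rfl | rfl
    · show (e ⟨0, h02⟩).1 = (0 : ℕ)
      exact hx0
    · show (e ⟨1, h12⟩).1 = (2 : ℕ)
      exact hy2
  -- e0 is a soft partial embedding
  have hsoft : IsSoftEmbedding PartialNonIncl p s e0 := by
    refine ⟨he0pos, ?_⟩
    intro i j hj1 hj2
    have hi1 : i.1 < 1 := i.2
    have hiv : i.1 = 0 := by omega
    have hj1' : 2 * i.1 < j.1 := hj1
    have hj2' : j.1 < 2 * (i.1 + 1) := hj2
    have hjv : j.1 = 1 := by omega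
    have hi0 : i = (⟨0, h01n⟩ : Fin p.neg.length) := Fin.ext hiv
    have hj0 : j = (⟨1, by omega⟩ : Fin s.length) := Fin.ext hjv
    rw [hi0, hj0]
    refine Or.inr ⟨c, ?_, ?_⟩
    · exact Finset.mem_insert_of_mem (Finset.mem_singleton_self c)
    · intro hc
      have hc' : c ∈ ({b} : Finset ι) := hc
      exact hbc (Finset.mem_singleton.mp hc').symm
  -- e0 is a strict partial embedding
  have hstrict : IsStrictEmbedding PartialNonIncl p s e0 := by
    refine ⟨he0pos, ?_⟩
    intro i
    have hi1 : i.1 < 1 := i.2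
    have hiv : i.1 = 0 := by omega
    have hi0 : i = (⟨0, h01n⟩ : Fin p.neg.length) := Fin.ext hiv
    rw [hi0]
    refine Or.inr ⟨c, ?_, ?_⟩
    · exact Finset.mem_insert_of_mem (Finset.mem_singleton_self c)
    · intro hc
      have hc' : c ∈ segUnion s 0 2 := hc
      rw [segUnion, Finset.mem_biUnion] at hc'
      obtain ⟨jj, hjj, hjm⟩ := hc'
      rw [Finset.mem_Ioo] at hjj
      have hjj1 : jj = 1 := by omega
      subst hjj1
      have hjm' : c ∈ ({b} : Finset ι) := hjm
      exact hbc (Finset.mem_singleton.mp hjm').symm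
  -- no total τ-embedding exists
  have hnototal : ∀ τ e, ¬ IsEmb τ TotalNonIncl p s e := by
    intro τ e hemb
    have hpos : IsPosEmbedding p s e := by cases τ <;> exact hemb.1
    obtain ⟨hx0, hy2⟩ := hmem_pos e hpos
    have hbmem : b ∈ p.neg.get ⟨0, h01n⟩ := Finset.mem_insert_self b {c}
    cases τ with
    | soft =>
      have hto := hemb.2 ⟨0, h01n⟩ (⟨1, by omega⟩ : Fin s.length)
        (by show (e ⟨0, h02⟩).1 < 1; omega)
        (by show (1 : ℕ) < (e ⟨1, h12⟩).1; omega)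
      have hbs : b ∈ s.get (⟨1, by omega⟩ : Fin s.length) := Finset.mem_singleton_self b
      exact hto b hbmem hbs
    | strict =>
      have hto := hemb.2 ⟨0, h01n⟩
      have hseg : b ∈ segUnion s (e ⟨0, h02⟩).1 (e ⟨1, h12⟩).1 := by
        rw [hx0, hy2, segUnion, Finset.mem_biUnion]
        refine ⟨1, Finset.mem_Ioo.mpr ⟨one_pos, one_lt_two⟩, ?_⟩
        exact Finset.mem_singleton_self b
      exact hto b hbmem hseg
  refine ⟨p, s, rfl, rfl, rfl, fun τ => ⟨?_, ⟨⟨e0, he0pos⟩, ?_⟩, ?_, ?_⟩⟩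
  · refine ⟨e0, ?_⟩
    cases τ with
    | soft => exact hsoft
    | strict => exact hstrict
  · intro e he
    rw [hforced e he]
    cases τ with
    | soft => exact hsoft
    | strict => exact hstrict
  · rintro ⟨e, he⟩
    exact hnototal τ e he
  · rintro ⟨⟨e, he⟩, hall⟩
    exact hnototal τ e (hall e he)

end NSPpaper
end

section
/- Over an item alphabet with at least three distinct items a, b, c, for every embedding type τ ∈ {soft, strict} and every non-inclusion relation ⋫ ∈ {partial, total}, the weak containment relation does not dominate the strong containment relation: there exist an NSP p and a sequence s (namely p = ⟨a ¬b c⟩ with singleton itemsets, and s = ⟨a c b c⟩ the list of singleton itemsets {a}, {c}, {b}, {c}) such that p weakly occurs in s under (τ, ⋫) but p does not strongly occur in s under (τ, ⋫). -/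
/-!
The embedding `(0, 1)` of `⟨a c⟩` in `⟨a c b c⟩` leaves no gap, so its negative constraint
only asks `{b} ⋫ ∅`, which holds for both relations: `p` occurs weakly. The embedding `(0, 3)`
jumps over the itemset `{b}`, which violates `¬b` under either relation and in either the soft
or the strict reading: `p` does not occur strongly.
-/

namespace NSPpaper

variable {ι : Type*}

/-- Properties shared by partial and total non-inclusion. -/
structure IsNonIncl (ni : Finset ι → Finset ι → Prop) : Prop where
  empty_right : ∀ P, ni P ∅
  mono_right : ∀ {P I J : Finset ι}, I ⊆ J → ni P J → ni P I
  not_of_subset : ∀ {P I : Finset ι}, P.Nonempty → P ⊆ I → ¬ ni P I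

theorem partialNonIncl_iff {P I : Finset ι} : PartialNonIncl P I ↔ ¬ (P.Nonempty ∧ P ⊆ I) := by
  simp only [PartialNonIncl, Finset.not_subset, not_and_or, Finset.not_nonempty_iff_eq_empty]

theorem totalNonIncl_iff_disjoint {P I : Finset ι} : TotalNonIncl P I ↔ Disjoint P I :=
  Finset.disjoint_left.symm

theorem isNonIncl_partialNonIncl : IsNonIncl (PartialNonIncl (ι := ι)) where
  empty_right _ := partialNonIncl_iff.2 fun ⟨⟨x, hx⟩, h⟩ => Finset.notMem_empty x (h hx)
  mono_right hIJ h :=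
    partialNonIncl_iff.2 fun ⟨hP, hPI⟩ => partialNonIncl_iff.1 h ⟨hP, hPI.trans hIJ⟩
  not_of_subset hP hPI h := partialNonIncl_iff.1 h ⟨hP, hPI⟩

theorem isNonIncl_totalNonIncl : IsNonIncl (TotalNonIncl (ι := ι)) where
  empty_right P := totalNonIncl_iff_disjoint.2 (Finset.disjoint_empty_right P)
  mono_right hIJ h := totalNonIncl_iff_disjoint.2 ((totalNonIncl_iff_disjoint.1 h).mono_right hIJ)
  not_of_subset hP hPI h :=
    hP.ne_empty <| Finset.disjoint_self_iff_empty _ |>.1 <|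
      (totalNonIncl_iff_disjoint.1 h).mono_right hPI

section Embeddings

variable [DecidableEq ι] {τ : EmbT} {ni : Finset ι → Finset ι → Prop} {p : NSP ι} {s : Seq ι}
  {e : Fin p.pos.length → Fin s.length}

theorem segUnion_self_succ (s : Seq ι) (k : ℕ) : segUnion s k (k + 1) = ∅ := by
  have : Finset.Ioo k (k + 1) = ∅ :=
    Finset.eq_empty_of_forall_notMem fun j hj => by rw [Finset.mem_Ioo] at hj; omega
  rw [segUnion, this, Finset.biUnion_empty]

theorem get_subset_segUnion {k l : ℕ} {j : Fin s.length} (hk : k < j) (hl : j < l) :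
    s.get j ⊆ segUnion s k l := by
  intro x hx
  simp only [segUnion, Finset.mem_biUnion, Finset.mem_Ioo]
  exact ⟨j, ⟨hk, hl⟩, by simpa [List.getD_eq_getElem] using hx⟩

theorem isEmb_of_consecutive (hni : ∀ P, ni P ∅) (he : IsPosEmbedding p s e)
    (hcons : ∀ i j : Fin p.pos.length, j.1 = i.1 + 1 → (e j).1 = (e i).1 + 1) :
    IsEmb τ ni p s e := by
  cases τ
  · refine ⟨he, fun i j h₁ h₂ => ?_⟩
    have := hcons ⟨i, by have := p.len; omega⟩ ⟨i + 1, by have := p.len; omega⟩ rfl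
    omega
  · refine ⟨he, fun i => ?_⟩
    rw [hcons ⟨i, by have := p.len; omega⟩ ⟨i + 1, by have := p.len; omega⟩ rfl,
      segUnion_self_succ]
    exact hni _

theorem not_isEmb_of_lt_of_lt (hmono : ∀ {P I J : Finset ι}, I ⊆ J → ni P J → ni P I)
    (k : Fin p.neg.length) (j : Fin s.length)
    (h₁ : (e ⟨k.1, by have := p.len; have := k.2; omega⟩).1 < j.1)
    (h₂ : j.1 < (e ⟨k.1 + 1, by have := p.len; have := k.2; omega⟩).1)
    (hj : ¬ ni (p.neg.get k) (s.get j)) :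
    ¬ IsEmb τ ni p s e := by
  cases τ
  · exact fun ⟨_, hneg⟩ => hj (hneg k j h₁ h₂)
  · exact fun ⟨_, hneg⟩ => hj (hmono (get_subset_segUnion h₁ h₂) (hneg k))

end Embeddings

theorem weak_not_dominates_strong_general {ι : Type*} [DecidableEq ι] (a b c : ι) :
    ∃ (p : NSP ι) (s : Seq ι),
      p.pos = [{a}, {c}] ∧ p.neg = [{b}] ∧ s = [{a}, {c}, {b}, {c}] ∧
      ∀ (τ : EmbT) (ni : Finset ι → Finset ι → Prop),
        (ni = PartialNonIncl ∨ ni = TotalNonIncl) →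
        WeakOcc τ ni p s ∧ ¬ StrongOcc τ ni p s := by
  let p : NSP ι := ⟨[{a}, {c}], [{b}], by simp, by simp, rfl⟩
  let s : Seq ι := [{a}, {c}, {b}, {c}]
  refine ⟨p, s, rfl, rfl, rfl, fun τ ni hni => ?_⟩
  have hrel : IsNonIncl ni := by
    rcases hni with rfl | rfl
    exacts [isNonIncl_partialNonIncl, isNonIncl_totalNonIncl]
  have hfirst : IsPosEmbedding p s ![0, 1] := by
    refine ⟨Fin.strictMono_iff_lt_succ.2 fun i => ?_, fun i => ?_⟩
    · fin_cases i; simp [s]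
    · fin_cases i <;> exact subset_rfl
  have hlast : IsPosEmbedding p s ![0, 3] := by
    refine ⟨Fin.strictMono_iff_lt_succ.2 fun i => ?_, fun i => ?_⟩
    · fin_cases i; simp [s, Fin.lt_def]
    · fin_cases i <;> exact subset_rfl
  have hb : ¬ ni {b} {b} := hrel.not_of_subset (Finset.singleton_nonempty b) subset_rfl
  refine ⟨⟨_, isEmb_of_consecutive hrel.empty_right hfirst ?_⟩, fun hstrong => ?_⟩
  · intro i j hij
    fin_cases i <;> fin_cases j <;> simp [s] at hij ⊢
  · exact not_isEmb_of_lt_of_lt (ni := ni) (p := p) (s := s) (e := ![0, 3]) hrel.mono_right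
      ⟨0, Nat.one_pos⟩ ⟨2, by simp [s]⟩ (by simp) (by simp [s])
      hb (hstrong.2 _ hlast)

/-- weak containment does not dominate strong containment:
with `p = ⟨a ¬b c⟩` and `s = ⟨a c b c⟩`, for every embedding type `τ` and every
non-inclusion relation, `p` weakly occurs in `s` but does not strongly occur in `s`. -/
theorem weak_not_dominates_strong {ι : Type*} [DecidableEq ι]
    (a b c : ι) (hab : a ≠ b) (hac : a ≠ c) (hbc : b ≠ c) :
    ∃ (p : NSP ι) (s : Seq ι),
      p.pos = [{a}, {c}] ∧ p.neg = [{b}] ∧ s = [{a}, {c}, {b}, {c}] ∧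
      ∀ (τ : EmbT) (ni : Finset ι → Finset ι → Prop),
        (ni = PartialNonIncl ∨ ni = TotalNonIncl) →
        WeakOcc τ ni p s ∧ ¬ StrongOcc τ ni p s :=
  weak_not_dominates_strong_general a b c

end NSPpaper
end

section
/- Each of the relations ⊑, ◁, and ⊑⁺ on the set of negative sequential patterns is a strict partial order: irreflexive, transitive, and asymmetric (if p ⋉ p' then not p' ⋉ p). -/
namespace NSPpaper

variable {ι : Type*}

private lemma fin_val_eq_of_strictMono {n m : ℕ} (h : n = m) (u : Fin n → Fin m)
    (hu : StrictMono u) : ∀ i, (u i : ℕ) = i := by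
  subst h
  have hwf : WellFoundedLT (Fin n) := inferInstance
  have h1 : ∀ i, i ≤ u i := fun i => hu.le_apply
  have h2 : ∀ j, u j ≤ j := by
    have hv : StrictMono (fun i : Fin n => (u i.rev).rev) := by
      intro a b hab
      exact Fin.rev_lt_rev.mpr (hu (Fin.rev_lt_rev.mpr hab))
    intro j
    have h3 : j.rev ≤ (u j).rev := by
      have h4 : j.rev ≤ (u j.rev.rev).rev := hv.le_apply
      simpa [Fin.rev_rev] using h4
    exact Fin.rev_le_rev.mp h3
  intro i
  exact congrArg Fin.val (le_antisymm (h2 i) (h1 i))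

private lemma get_eq_getD {ι : Type*} (l : List (Finset ι)) (i : Fin l.length) :
    l.get i = l.getD i.1 ∅ := by
  rw [List.getD_eq_getElem _ _ i.2, List.get_eq_getElem]

/- irreflexivity of ⊑ -/
private lemma nspIncl_irrefl {ι : Type*} [DecidableEq ι] (p : NSP ι) : ¬ NspIncl p p := by
  rintro ⟨-, u, hu, -, -, hst⟩
  rcases hst rfl with ⟨j, hj⟩ | ⟨j, hj⟩
  · exact hj (get_eq_getD _ j)
  · exact hj (get_eq_getD _ j)

/- transitivity of ⊑ -/
private lemma nspIncl_trans {ι : Type*} [DecidableEq ι] {p p' p'' : NSP ι}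
    (h1 : NspIncl p p') (h2 : NspIncl p' p'') : NspIncl p p'' := by
  obtain ⟨hl1, u, hu, hpos, hneg, hst⟩ := h1
  obtain ⟨hl2, u', hu', hpos', hneg', hst'⟩ := h2
  refine ⟨hl1.trans hl2, fun i => u' (u i), hu'.comp hu,
    fun i => (hpos i).trans (hpos' (u i)), ?_, ?_⟩
  · intro i e he
    have hi1 : i.1 < p.pos.length := by have := p.len; omega
    have hi2 : i.1 + 1 < p.pos.length := by have := p.len; have := i.2; omega
    have hen := hneg i he
    rw [Finset.mem_biUnion] at hen
    obtain ⟨j, hj, hej⟩ := hen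
    rw [Finset.mem_Ico] at hj
    have hjp : j < p'.pos.length := lt_trans hj.2 (u ⟨i.1 + 1, hi2⟩).2
    have hj2 : j < p'.neg.length := by
      have hb := (u ⟨i.1 + 1, hi2⟩).2
      have := p'.len; omega
    rw [List.getD_eq_getElem _ _ hj2] at hej
    have hen' := hneg' ⟨j, hj2⟩ (by simpa [List.get_eq_getElem] using hej)
    rw [Finset.mem_biUnion] at hen'
    obtain ⟨l, hl, hel⟩ := hen'
    rw [Finset.mem_Ico] at hl
    rw [Finset.mem_biUnion]
    refine ⟨l, ?_, hel⟩
    rw [Finset.mem_Ico]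
    have hjp1 : j + 1 < p'.pos.length := by have := p'.len; omega
    have m1 : (u' (u ⟨i.1, hi1⟩)).1 ≤ (u' ⟨j, hjp⟩).1 :=
      hu'.monotone (Fin.le_def.mpr hj.1)
    have m2 : (u' ⟨j + 1, hjp1⟩).1 ≤ (u' (u ⟨i.1 + 1, hi2⟩)).1 :=
      hu'.monotone (Fin.le_def.mpr hj.2)
    constructor
    · exact le_trans m1 hl.1
    · exact lt_of_lt_of_le hl.2 m2
  · intro hlen
    have hL1 : p.pos.length = p'.pos.length := le_antisymm hl1 (by omega)
    have hL2 : p'.pos.length = p''.pos.length := by omega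
    have hv1 := fin_val_eq_of_strictMono hL1 u hu
    have hv2 := fin_val_eq_of_strictMono hL2 u' hu'
    by_contra hcon
    push_neg at hcon
    obtain ⟨hcpos, hcneg⟩ := hcon
    have hNL : p.neg.length = p'.neg.length := by
      have := p.len; have := p'.len; omega
    -- pointwise pos inclusion p' → p''
    have hpos2 : ∀ k (hk : k < p'.pos.length),
        p'.pos.getD k ∅ ⊆ p''.pos.getD k ∅ := by
      intro k hk
      have := hpos' ⟨k, hk⟩
      rw [get_eq_getD, get_eq_getD] at this
      rwa [hv2 ⟨k, hk⟩] at this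
    have hpos1 : ∀ j : Fin p.pos.length, p.pos.get j ⊆ p'.pos.getD j.1 ∅ := by
      intro j
      have := hpos j
      rw [get_eq_getD p'.pos] at this
      rwa [hv1 j] at this
    -- pointwise neg inclusion
    have hneg1 : ∀ j : Fin p.neg.length, p.neg.get j ⊆ p'.neg.getD j.1 ∅ := by
      intro j
      have hj1 : j.1 < p.pos.length := by have := p.len; omega
      have hj2 : j.1 + 1 < p.pos.length := by have := p.len; have := j.2; omega
      have := hneg j
      rw [hv1 ⟨j.1, hj1⟩, hv1 ⟨j.1 + 1, hj2⟩] at this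
      simpa [Finset.Ico_add_one_right_eq_Icc] using this
    have hneg2 : ∀ k (hk : k < p'.neg.length),
        p'.neg.getD k ∅ ⊆ p''.neg.getD k ∅ := by
      intro k hk
      have hk1 : k < p'.pos.length := by have := p'.len; omega
      have hk2 : k + 1 < p'.pos.length := by have := p'.len; omega
      have := hneg' ⟨k, hk⟩
      rw [hv2 ⟨k, hk1⟩, hv2 ⟨k + 1, hk2⟩, get_eq_getD] at this
      simpa [Finset.Ico_add_one_right_eq_Icc] using this
    rcases hst hL1 with ⟨j, hj⟩ | ⟨j, hj⟩
    · refine hj (Finset.Subset.antisymm (hpos1 j) ?_)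
      have := hpos2 j.1 (by omega)
      rwa [← hcpos j] at this
    · refine hj (Finset.Subset.antisymm (hneg1 j) ?_)
      have := hneg2 j.1 (by omega)
      rwa [← hcneg j] at this

/- irreflexivity of ◁ -/
private lemma lhd_irrefl {ι : Type*} (p : NSP ι) : ¬ Lhd p p := by
  rintro ⟨-, -, -, hst⟩
  rcases hst rfl with hj | ⟨j, hj⟩
  · exact hj rfl
  · exact hj (get_eq_getD _ j)

/- transitivity of ◁ -/
private lemma lhd_trans {ι : Type*} {p p' p'' : NSP ι}
    (h1 : Lhd p p') (h2 : Lhd p' p'') : Lhd p p'' := by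
  obtain ⟨hl1, hpos, hneg, hst⟩ := h1
  obtain ⟨hl2, hpos', hneg', hst'⟩ := h2
  have hN1 : p.neg.length ≤ p'.neg.length := by
    have := p.len; have := p'.len; omega
  refine ⟨hl1.trans hl2, ?_, ?_, ?_⟩
  · intro i
    have hi : i.1 < p'.pos.length := lt_of_lt_of_le i.2 hl1
    refine (hpos i).trans ?_
    have := hpos' ⟨i.1, hi⟩
    rwa [get_eq_getD] at this
  · intro i
    have hi : i.1 < p'.neg.length := lt_of_lt_of_le i.2 hN1
    refine (hneg i).trans ?_
    have := hneg' ⟨i.1, hi⟩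
    rwa [get_eq_getD] at this
  · intro hlen
    have hL1 : p.pos.length = p'.pos.length := le_antisymm hl1 (by omega)
    have hNL : p.neg.length = p'.neg.length := by
      have := p.len; have := p'.len; omega
    by_contra hcon
    push_neg at hcon
    obtain ⟨hcpos, hcneg⟩ := hcon
    rcases hst hL1 with hj | ⟨j, hj⟩
    · have hlt : p.pos.length - 1 < p.pos.length :=
        Nat.sub_lt (List.length_pos_iff.mpr p.pos_ne) one_pos
      have s1 : p.pos.getD (p.pos.length - 1) ∅ ⊆ p'.pos.getD (p.pos.length - 1) ∅ := by
        have := hpos ⟨p.pos.length - 1, hlt⟩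
        rwa [get_eq_getD] at this
      have s2 : p'.pos.getD (p.pos.length - 1) ∅ ⊆ p''.pos.getD (p.pos.length - 1) ∅ := by
        have := hpos' ⟨p.pos.length - 1, by omega⟩
        rwa [get_eq_getD] at this
      rw [← hcpos] at s2
      exact hj (Finset.Subset.antisymm s1 s2)
    · have s1 : p.neg.get j ⊆ p'.neg.getD j.1 ∅ := hneg j
      have s2 : p'.neg.getD j.1 ∅ ⊆ p''.neg.getD j.1 ∅ := by
        have := hneg' ⟨j.1, by omega⟩
        rwa [get_eq_getD] at this
      rw [← hcneg j] at s2
      exact hj (Finset.Subset.antisymm s1 s2)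

/- irreflexivity of ⊑⁺ -/
private lemma nspInclPlus_irrefl {ι : Type*} (p : NSP ι) : ¬ NspInclPlus p p := by
  rintro ⟨-, -, -, j, hj⟩
  exact hj (get_eq_getD _ j)

/- transitivity of ⊑⁺ -/
private lemma nspInclPlus_trans {ι : Type*} {p p' p'' : NSP ι}
    (h1 : NspInclPlus p p') (h2 : NspInclPlus p' p'') : NspInclPlus p p'' := by
  obtain ⟨hl1, hpos, hneg, j, hj⟩ := h1
  obtain ⟨hl2, hpos', hneg', hst'⟩ := h2
  have hNL : p.neg.length = p'.neg.length := by
    have := p.len; have := p'.len; omega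
  have hNL2 : p'.neg.length = p''.neg.length := by
    have := p'.len; have := p''.len; omega
  refine ⟨hl1.trans hl2, ?_, ?_, ?_⟩
  · intro i
    have hi : i.1 < p'.pos.length := by omega
    rw [hpos i]
    have := hpos' ⟨i.1, hi⟩
    rwa [get_eq_getD] at this
  · intro i
    have hi : i.1 < p'.neg.length := by omega
    refine (hneg i).trans ?_
    have := hneg' ⟨i.1, hi⟩
    rwa [get_eq_getD] at this
  · refine ⟨j, fun hEq => hj ?_⟩
    have hjlt : j.1 < p'.neg.length := by omega
    have s1 : p.neg.get j ⊆ p'.neg.getD j.1 ∅ := hneg j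
    have s2 : p'.neg.getD j.1 ∅ ⊆ p''.neg.getD j.1 ∅ := by
      have := hneg' ⟨j.1, hjlt⟩
      rwa [get_eq_getD] at this
    rw [← hEq] at s2
    exact Finset.Subset.antisymm s1 s2

/-- each of `⊑`, `◁`, `⊑⁺` is a strict partial order on the set of
negative sequential patterns: irreflexive, transitive and asymmetric. -/
theorem strict_partial_orders {ι : Type*} [DecidableEq ι] :
    ((∀ p : NSP ι, ¬ NspIncl p p) ∧
     (∀ p p' p'' : NSP ι, NspIncl p p' → NspIncl p' p'' → NspIncl p p'') ∧
     (∀ p p' : NSP ι, NspIncl p p' → ¬ NspIncl p' p)) ∧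
    ((∀ p : NSP ι, ¬ Lhd p p) ∧
     (∀ p p' p'' : NSP ι, Lhd p p' → Lhd p' p'' → Lhd p p'') ∧
     (∀ p p' : NSP ι, Lhd p p' → ¬ Lhd p' p)) ∧
    ((∀ p : NSP ι, ¬ NspInclPlus p p) ∧
     (∀ p p' p'' : NSP ι, NspInclPlus p p' → NspInclPlus p' p'' → NspInclPlus p p'') ∧
     (∀ p p' : NSP ι, NspInclPlus p p' → ¬ NspInclPlus p' p)) := by
  refine ⟨⟨nspIncl_irrefl, fun p p' p'' => nspIncl_trans,
      fun p p' h h' => nspIncl_irrefl p (nspIncl_trans h h')⟩,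
    ⟨lhd_irrefl, fun p p' p'' => lhd_trans,
      fun p p' h h' => lhd_irrefl p (lhd_trans h h')⟩,
    ⟨nspInclPlus_irrefl, fun p p' p'' => nspInclPlus_trans,
      fun p p' h h' => nspInclPlus_irrefl p (nspInclPlus_trans h h')⟩⟩


end NSPpaper
end

section
/- The weak containment relations under total non-inclusion, with either soft or strict embeddings, are anti-monotonic on (N, ◁): for all negative sequential patterns p, p' with p ◁ p', every sequence s, and every embedding type τ ∈ {soft, strict}, if p' weakly occurs in s under (τ, total) then p weakly occurs in s under (τ, total). -/
namespace NSPpaper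

variable {ι : Type*}

private lemma getD_eq_get' {α : Type*} (l : List α) (d : α) {n : ℕ} (h : n < l.length) :
    l.getD n d = l.get ⟨n, h⟩ := by
  simp [List.getD_eq_getElem?_getD, List.getElem?_eq_getElem h]

private lemma total_mono {ι : Type*} {q q' I : Finset ι} (h : q ⊆ q')
    (h' : TotalNonIncl q' I) : TotalNonIncl q I := fun e he => h' e (h he)

/-- the weak containment relations under total non-inclusion (soft or
strict embeddings) are anti-monotonic on `(N, ◁)`. -/
theorem weak_total_antimonotone_on_lhd {ι : Type*} [DecidableEq ι]
    (p p' : NSP ι) (h : Lhd p p') (s : Seq ι) (τ : EmbT)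
    (h' : WeakOcc τ TotalNonIncl p' s) : WeakOcc τ TotalNonIncl p s := by
  obtain ⟨hlen, hpos, hneg, _⟩ := h
  obtain ⟨e', he'⟩ := h'
  have hp := p.len
  have hp' := p'.len
  set e : Fin p.pos.length → Fin s.length :=
    fun i => e' ⟨i.1, lt_of_lt_of_le i.2 hlen⟩ with he_def
  have hposE : IsPosEmbedding p' s e' → IsPosEmbedding p s e := by
    rintro ⟨hm, hsub⟩
    constructor
    · intro a b hab
      exact hm (by exact hab)
    · intro i
      refine subset_trans ?_ (hsub ⟨i.1, lt_of_lt_of_le i.2 hlen⟩)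
      have := hpos i
      rwa [getD_eq_get' _ _ (lt_of_lt_of_le i.2 hlen)] at this
  have hnegsub : ∀ i : Fin p.neg.length,
      p.neg.get i ⊆ p'.neg.get ⟨i.1, by omega⟩ := by
    intro i
    have := hneg i
    rwa [getD_eq_get' _ _ (show i.1 < p'.neg.length by omega)] at this
  refine ⟨e, ?_⟩
  cases τ with
  | soft =>
    obtain ⟨hposE', hnegE'⟩ := he'
    refine ⟨hposE hposE', ?_⟩
    intro i j h1 h2
    exact total_mono (hnegsub i)
      (hnegE' ⟨i.1, by omega⟩ j h1 h2)
  | strict =>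
    obtain ⟨hposE', hnegE'⟩ := he'
    refine ⟨hposE hposE', ?_⟩
    intro i
    exact total_mono (hnegsub i) (hnegE' ⟨i.1, by omega⟩)

end NSPpaper
end

section
/- All four containment relations under total non-inclusion — weak or strong occurrence combined with soft or strict embeddings — are anti-monotonic on (N, ⊑⁺): for all negative sequential patterns p, p' with p ⊑⁺ p', every sequence s, every occurrence mode μ ∈ {weak, strong}, and every embedding type τ ∈ {soft, strict}, if p' occurs in s under (μ, τ, total) then p occurs in s under (μ, τ, total). -/
namespace NSPpaper

variable {ι : Type*}

/-- all four containment relations under total non-inclusion (weak or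
strong occurrence, soft or strict embeddings) are anti-monotonic on `(N, ⊑⁺)`. -/
theorem total_antimonotone_on_nspInclPlus {ι : Type*} [DecidableEq ι]
    (p p' : NSP ι) (h : NspInclPlus p p') (s : Seq ι) (μ : OccMode) (τ : EmbT)
    (h' : Occurs μ τ TotalNonIncl p' s) : Occurs μ τ TotalNonIncl p s := by
  obtain ⟨hl, hpos, hneg, -⟩ := h
  have hnl : p.neg.length = p'.neg.length := by
    have h1 := p.len; have h2 := p'.len; omega
  have tni_mono : ∀ {q q' I : Finset ι}, q ⊆ q' → TotalNonIncl q' I → TotalNonIncl q I :=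
    fun hq h e he => h e (hq he)
  -- positive parts agree
  have hposget : ∀ i : Fin p.pos.length, p.pos.get i = p'.pos.get (Fin.cast hl i) := by
    intro i
    have := hpos i
    rwa [List.getD_eq_getElem _ _ (by omega : i.1 < p'.pos.length)] at this
  have hnegsub : ∀ i : Fin p.neg.length, p.neg.get i ⊆ p'.neg.get (Fin.cast hnl i) := by
    intro i
    have := hneg i
    rwa [List.getD_eq_getElem _ _ (by omega : i.1 < p'.neg.length)] at this
  -- positive embeddings transfer both ways
  have posEq : ∀ e : Fin p'.pos.length → Fin s.length,
      IsPosEmbedding p' s e ↔ IsPosEmbedding p s (fun i => e (Fin.cast hl i)) := by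
    intro e
    constructor
    · rintro ⟨hm, hs⟩
      refine ⟨fun a b hab => hm (by simpa using hab), fun i => ?_⟩
      rw [hposget i]; exact hs _
    · rintro ⟨hm, hs⟩
      refine ⟨fun a b hab => ?_, fun i => ?_⟩
      · have := hm (a := Fin.cast hl.symm a) (b := Fin.cast hl.symm b) (by simpa using hab)
        simpa using this
      · have := hs (Fin.cast hl.symm i)
        rwa [hposget] at this
  have embT : ∀ (e : Fin p'.pos.length → Fin s.length),
      IsEmb τ TotalNonIncl p' s e → IsEmb τ TotalNonIncl p s (fun i => e (Fin.cast hl i)) := by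
    intro e he
    cases τ with
    | soft =>
      obtain ⟨hpe, hn⟩ := he
      refine ⟨(posEq e).1 hpe, fun i j h1 h2 => ?_⟩
      exact tni_mono (hnegsub i) (hn (Fin.cast hnl i) j h1 h2)
    | strict =>
      obtain ⟨hpe, hn⟩ := he
      refine ⟨(posEq e).1 hpe, fun i => ?_⟩
      exact tni_mono (hnegsub i) (hn (Fin.cast hnl i))
  cases μ with
  | weak =>
    obtain ⟨e, he⟩ := h'
    exact ⟨_, embT e he⟩
  | strong =>
    obtain ⟨⟨e0, he0⟩, hall⟩ := h'
    refine ⟨⟨_, (posEq e0).1 he0⟩, fun e he => ?_⟩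
    have he' : IsPosEmbedding p' s (fun i => e (Fin.cast hl.symm i)) := by
      have := (posEq (fun i => e (Fin.cast hl.symm i))).2
      exact this he
    exact embT _ (hall _ he')

end NSPpaper
end
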